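/- arXiv:2509.24309 — 2 statements merged into one kernel-verified Lean document; each statement's English description precedes it below -/
import Mathlib

section
/- Let B and B' be two distinct bases of a matroid M that both have minimum weight with respect to w, let e ∈ B' \ B, and let C be the unique circuit contained in B ∪ {e}. Then every element e' ∈ C satisfies w(e') = w(e) or w(e') < w(e); moreover C contains no element of weight strictly greater than w(e). -/
/-!
`C` is the fundamental circuit of `e` with respect to `B`, so for every `f ∈ C ∩ B` the set
`B - f + e` is again a base. Its weight `w(B) - w f + w e` is at least `w(B)` by minimality of `B`,
which gives `w f ≤ w e`.
-/

open Matroid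

variable {α : Type*}

/-- The total weight of a set of elements. -/
noncomputable def wt (w : α → ℝ) (B : Set α) : ℝ := ∑ᶠ e ∈ B, w e

/-- `B` is a minimum-weight basis of `(M, w)`. -/
def MinWeightBase (M : Matroid α) (w : α → ℝ) (B : Set α) : Prop :=
  M.IsBase B ∧ ∀ B', M.IsBase B' → wt w B ≤ wt w B'

/-- A circuit of a matroid: a minimal dependent set. -/
def IsCircuit (M : Matroid α) (C : Set α) : Prop :=
  C ⊆ M.E ∧ ¬ M.Indep C ∧ ∀ D ⊂ C, M.Indep D

theorem isCircuit_iff_matroid_isCircuit {M : Matroid α} {C : Set α} :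
    _root_.IsCircuit M C ↔ M.IsCircuit C := by
  rw [Matroid.isCircuit_iff_forall_ssubset, Matroid.Dep, _root_.IsCircuit]
  tauto

theorem wt_insert_sdiff_singleton (w : α → ℝ) {B : Set α} {e f : α} (hB : B.Finite)
    (heB : e ∉ B) (hf : f ∈ insert e B) : wt w (insert e B \ {f}) = wt w B + w e - w f := by
  have h_insert : wt w (insert e B) = w e + wt w B := finsum_mem_insert w heB hB
  have h_remove : wt w (insert f (insert e B \ {f})) = w f + wt w (insert e B \ {f}) :=
    finsum_mem_insert w (fun h ↦ h.2 rfl) (hB.insert e).sdiff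
  rw [Set.insert_sdiff_singleton, Set.insert_eq_of_mem hf] at h_remove
  linarith

namespace Matroid

variable {M : Matroid α} {B C : Set α} {e f : α}

theorem IsCircuit.isBase_insert_sdiff (hC : M.IsCircuit C) (hB : M.IsBase B)
    (hCB : C ⊆ insert e B) (heB : e ∉ B) (hfC : f ∈ C) (hfB : f ∈ B) :
    M.IsBase (insert e B \ {f}) := by
  have heC : e ∈ C := by
    obtain hCB' | ⟨heC, -⟩ := Set.subset_insert_iff.1 hCB
    · exact (hC.not_indep (hB.indep.subset hCB')).elim
    · exact heC
  rw [hC.eq_fundCircuit_of_subset hB.indep hCB,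
    hB.indep.mem_fundCircuit_iff (by rw [hB.closure_eq]; exact hC.subset_ground heC) heB] at hfC
  exact hB.exchange_isBase_of_indep' hfB heB hfC

end Matroid

theorem MinWeightBase.le_of_mem_isCircuit {M : Matroid α} [M.RankFinite] {w : α → ℝ}
    {B C : Set α} {e f : α} (hB : MinWeightBase M w B) (hC : M.IsCircuit C)
    (hCB : C ⊆ insert e B) (heB : e ∉ B) (hfC : f ∈ C) : w f ≤ w e := by
  by_cases hfB : f ∈ B
  · have hmin := hB.2 _ (hC.isBase_insert_sdiff hB.1 hCB heB hfC hfB)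
    rw [wt_insert_sdiff_singleton w hB.1.finite heB (Set.mem_insert_of_mem e hfB)] at hmin
    linarith
  · obtain rfl : f = e := by simpa [hfB] using hCB hfC
    exact le_rfl

theorem stmt15_general [Fintype α] (M : Matroid α) (w : α → ℝ) (B B' : Set α)
    (hB : MinWeightBase M w B)
    (e : α) (he : e ∈ B' \ B) (C : Set α) (hC : _root_.IsCircuit M C) (hCsub : C ⊆ B ∪ {e}) :
    (∀ e' ∈ C, w e' = w e ∨ w e' < w e) ∧ ∀ e' ∈ C, ¬ w e < w e' := by
  have hCB : C ⊆ insert e B := Set.union_singleton ▸ hCsub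
  have hle : ∀ e' ∈ C, w e' ≤ w e := fun _ he' ↦
    hB.le_of_mem_isCircuit (isCircuit_iff_matroid_isCircuit.1 hC) hCB he.2 he'
  exact ⟨fun e' he' ↦ (hle e' he').eq_or_lt, fun e' he' ↦ (hle e' he').not_gt⟩

/-- If `B ≠ B'` are minimum-weight bases, `e ∈ B' \ B`, and `C` is the
unique circuit contained in `B ∪ {e}`, then every `e' ∈ C` has weight equal to or less
than `w e`; moreover `C` contains no element of weight strictly greater than `w e`. -/
theorem stmt15 [Fintype α] (M : Matroid α) (w : α → ℝ) (B B' : Set α)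
    (hB : MinWeightBase M w B) (hB' : MinWeightBase M w B') (hne : B ≠ B')
    (e : α) (he : e ∈ B' \ B) (C : Set α) (hC : _root_.IsCircuit M C) (hCsub : C ⊆ B ∪ {e}) :
    (∀ e' ∈ C, w e' = w e ∨ w e' < w e) ∧ ∀ e' ∈ C, ¬ w e < w e' :=
  stmt15_general M w B B' hB e he C hC hCsub
end

section
/- Let G be a directed acyclic graph with s, t ∈ V(G). For an edge e = (u,v), define OPT[e] as the minimum size of a forcing set S for s-v paths with e ∈ S, and OPT[s] = 0, OPT[v] = min over in-edges e of v of OPT[e]. Then OPT[e] = min{ OPT[w] : w ∈ V(G), w ↝! u } + 1, where w ↝! u means there is exactly one path from w to u in G. -/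
variable {V : Type*}

/-- `l` is the vertex list of a directed simple path from `u` to `v` using edges in `E`. -/
def IsPathOn (E : Set (V × V)) (u v : V) (l : List V) : Prop :=
  l ≠ [] ∧ l.Chain' (fun a b => (a, b) ∈ E) ∧ l.Nodup ∧ l.head? = some u ∧ l.getLast? = some v

/-- The list of edges of a path, in order. -/
def pathEdges (l : List V) : List (V × V) := l.zip l.tail

/-- A directed graph (given by its edge set) is acyclic. -/
def Acyclic (E : Set (V × V)) : Prop :=
  ∀ x : V, ¬ Relation.TransGen (fun a b => (a, b) ∈ E) x x

/-- There is exactly one directed path from `u` to `v` (`u ↝! v`). -/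
def UniquePath (E : Set (V × V)) (u v : V) : Prop :=
  ∃! l : List V, IsPathOn E u v l

/-- `S` is a forcing set for the `s`-`v` paths: exactly one `s`-`v` path contains all
edges of `S`. -/
def ForcingSet (E : Set (V × V)) (s v : V) (S : Finset (V × V)) : Prop :=
  ∃! l : List V, IsPathOn E s v l ∧ ∀ e ∈ S, e ∈ pathEdges l

/-- `OPT[e]` for an edge `e = (u, v)`: the minimum size of a forcing set `S` for the
`s`-`v` paths with `e ∈ S`. -/
noncomputable def OPTe (E : Set (V × V)) (s : V) (e : V × V) : ℕ :=
  sInf {n : ℕ | ∃ S : Finset (V × V), e ∈ S ∧ ForcingSet E s e.2 S ∧ S.card = n}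

/-- `OPT[v]`: zero for `v = s`, and otherwise the minimum of `OPT[(u, v)]` over in-edges
`(u, v)` of `v`. -/
noncomputable def OPTv [DecidableEq V] (E : Set (V × V)) (s : V) (v : V) : ℕ :=
  if v = s then 0 else sInf {n : ℕ | ∃ u : V, (u, v) ∈ E ∧ n = OPTe E s (u, v)}

/-!
A forcing set `S ∋ (u, v)` for the `s`-`v` paths is exactly a forcing set `S \ {(u, v)}` for the
`s`-`u` paths with the edge `(u, v)` added. Cut the path forced by a forcing set `T` for the `s`-`u`
paths at the farthest head `w` of an edge of `T` (at `w = s` if `T = ∅`): then `T` forces the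
`s`-`w` part, and the `w`-`u` part, which carries no edge of `T`, has to be the only `w`-`u` path.
Conversely, a forcing set for the `s`-`w` paths whose forced path must visit `w` (because `w = s` or
an edge into `w` is in the set) still forces the `s`-`u` paths when `w ↝! u`. Acyclicity is what
makes concatenated paths simple and keeps the edges of `T` out of the `w`-`u` part.
-/

open Relation List

section

variable {E : Set (V × V)} {a b c x y s u v w : V} {l P Q : List V} {S : Finset (V × V)}

local notation:50 x:51 " ⇝ " y:51 => ReflTransGen (fun a b => (a, b) ∈ E) x y

theorem Acyclic.antisymm (hacyc : Acyclic E) (hab : a ⇝ b) (hba : b ⇝ a) : a = b := by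
  rcases reflTransGen_iff_eq_or_transGen.mp hab with h | h
  · exact h.symm
  · exact absurd (h.trans_left hba) (hacyc a)

theorem Acyclic.not_reflTransGen_of_mem (hacyc : Acyclic E) (he : (a, b) ∈ E) : ¬ b ⇝ a :=
  fun hba => hacyc a (TransGen.head' he hba)

theorem Acyclic.ne_of_mem (hacyc : Acyclic E) (he : (a, b) ∈ E) : a ≠ b := by
  rintro rfl
  exact hacyc.not_reflTransGen_of_mem he ReflTransGen.refl

theorem pathEdges_cons_cons (l : List V) : pathEdges (a :: b :: l) = (a, b) :: pathEdges (b :: l) :=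
  rfl

theorem exists_eq_append_of_mem_pathEdges :
    ∀ {l : List V}, (x, y) ∈ pathEdges l → ∃ l₁ l₂, l = l₁ ++ x :: y :: l₂
  | [], h | [_], h => by simp [pathEdges] at h
  | a :: b :: l, h => by
    rcases mem_cons.mp h with h | h
    · obtain ⟨rfl, rfl⟩ := Prod.mk.inj h
      exact ⟨[], l, rfl⟩
    · obtain ⟨l₁, l₂, hl⟩ := exists_eq_append_of_mem_pathEdges h
      exact ⟨a :: l₁, l₂, by rw [hl, cons_append]⟩

theorem fst_mem_of_mem_pathEdges (h : (x, y) ∈ pathEdges l) : x ∈ l :=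
  (of_mem_zip h).1

theorem snd_mem_of_mem_pathEdges (h : (x, y) ∈ pathEdges l) : y ∈ l :=
  mem_of_mem_tail (of_mem_zip h).2

theorem pathEdges_append_cons (l₁ l₂ : List V) :
    pathEdges (l₁ ++ b :: l₂) = pathEdges (l₁ ++ [b]) ++ pathEdges (b :: l₂) := by
  induction l₁ with
  | nil => rfl
  | cons a l₁ ih => cases l₁ <;> simp_all [pathEdges_cons_cons]

theorem pathEdges_subset_append (l₁ l₂ : List V) :
    pathEdges l₁ ⊆ pathEdges (l₁ ++ l₂) := by
  rcases eq_nil_or_concat' l₁ with rfl | ⟨l₁, a, rfl⟩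
  · exact nil_subset _
  · rw [append_assoc, singleton_append, pathEdges_append_cons l₁ l₂]
    exact subset_append_left _ _

namespace IsPathOn

theorem isChain (hp : IsPathOn E a b l) : l.IsChain (fun x y => (x, y) ∈ E) := hp.2.1

theorem nodup (hp : IsPathOn E a b l) : l.Nodup := hp.2.2.1

theorem head?_eq (hp : IsPathOn E a b l) : l.head? = some a := hp.2.2.2.1

theorem getLast?_eq (hp : IsPathOn E a b l) : l.getLast? = some b := hp.2.2.2.2

theorem eq_cons (hp : IsPathOn E a b l) : l = a :: l.tail := (cons_head?_tail hp.head?_eq).symm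

theorem head_mem (hp : IsPathOn E a b l) : a ∈ l := mem_of_mem_head? hp.head?_eq

theorem singleton (a : V) : IsPathOn E a a [a] :=
  ⟨cons_ne_nil a [], isChain_singleton a, nodup_singleton a, rfl, rfl⟩

theorem pair (hacyc : Acyclic E) (he : (a, b) ∈ E) : IsPathOn E a b [a, b] :=
  ⟨by simp, isChain_pair.mpr he, by simp [hacyc.ne_of_mem he], rfl, rfl⟩

theorem pairwise (hp : IsPathOn E a b l) : l.Pairwise (· ⇝ ·) :=
  isChain_iff_pairwise.mp (hp.isChain.imp fun _ _ => ReflTransGen.single)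

theorem reflTransGen_of_mem (hp : IsPathOn E a b l) (hx : x ∈ l) : a ⇝ x ∧ x ⇝ b := by
  constructor
  · obtain ⟨t, rfl⟩ := head?_eq_some_iff.mp hp.head?_eq
    rcases mem_cons.mp hx with rfl | hx
    · exact ReflTransGen.refl
    · exact (pairwise_cons.mp hp.pairwise).1 x hx
  · obtain ⟨t, rfl⟩ := getLast?_eq_some_iff.mp hp.getLast?_eq
    rcases mem_append.mp hx with hx | hx
    · exact (pairwise_append.mp hp.pairwise).2.2 x hx b (mem_singleton_self b)
    · rw [mem_singleton.mp hx]

theorem reflTransGen_of_idxOf_le [DecidableEq V] (hp : IsPathOn E a b l) (hx : x ∈ l)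
    (hy : y ∈ l) (h : l.idxOf x ≤ l.idxOf y) : x ⇝ y := by
  have hx' := getElem_idxOf (idxOf_lt_length_of_mem hx)
  have hy' := getElem_idxOf (idxOf_lt_length_of_mem hy)
  rcases h.lt_or_eq with h | h
  · rw [← hx', ← hy']
    exact pairwise_iff_getElem.mp hp.pairwise _ _ _ _ h
  · simp only [h] at hx'
    rw [← hx', hy']

theorem eq_singleton (hp : IsPathOn E a a l) : l = [a] := by
  obtain ⟨-, -, hnd, hh, hl⟩ := hp
  obtain ⟨ys, rfl⟩ := getLast?_eq_some_iff.mp hl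
  cases ys with
  | nil => rfl
  | cons y ys =>
    obtain rfl : y = a := by simpa using hh
    simp at hnd

theorem left_of_append_cons {l₁ l₂ : List V} (hp : IsPathOn E a c (l₁ ++ b :: l₂)) :
    IsPathOn E a b (l₁ ++ [b]) := by
  obtain ⟨-, hc, hnd, hh, -⟩ := hp
  refine ⟨by simp, (isChain_split.mp hc).1, ?_, ?_, getLast?_concat⟩
  · exact hnd.sublist (by simp)
  · simpa [head?_append] using hh

theorem right_of_append_cons {l₁ l₂ : List V} (hp : IsPathOn E a c (l₁ ++ b :: l₂)) :
    IsPathOn E b c (b :: l₂) := by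
  obtain ⟨-, hc, hnd, -, hl⟩ := hp
  refine ⟨by simp, (isChain_split.mp hc).2, hnd.sublist (by simp), rfl, ?_⟩
  simpa [getLast?_append] using hl

theorem mem_edgeSet (hp : IsPathOn E a b l) (he : (x, y) ∈ pathEdges l) : (x, y) ∈ E := by
  obtain ⟨l₁, l₂, rfl⟩ := exists_eq_append_of_mem_pathEdges he
  exact (isChain_append_cons_cons.mp hp.isChain).2.1

theorem append (hacyc : Acyclic E) (hP : IsPathOn E a b P) (hQ : IsPathOn E b c Q) :
    IsPathOn E a c (P ++ Q.tail) := by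
  obtain ⟨P, rfl⟩ := getLast?_eq_some_iff.mp hP.getLast?_eq
  obtain ⟨Q, rfl⟩ := head?_eq_some_iff.mp hQ.head?_eq
  have hdisj : ∀ x ∈ P ++ [b], ∀ y ∈ Q, x ≠ y := by
    rintro x hx _ hy rfl
    have hxb : x = b := hacyc.antisymm (hP.reflTransGen_of_mem hx).2
      (hQ.reflTransGen_of_mem (mem_cons_of_mem b hy)).1
    exact (nodup_cons.mp hQ.nodup).1 (hxb ▸ hy)
  rw [tail_cons, append_assoc, singleton_append]
  refine ⟨by simp, isChain_split.mpr ⟨hP.isChain, hQ.isChain⟩, ?_,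
    by simpa [head?_append] using hP.head?_eq, ?_⟩
  · simpa using nodup_append.mpr ⟨hP.nodup, (nodup_cons.mp hQ.nodup).2, hdisj⟩
  · simpa [getLast?_append] using hQ.getLast?_eq

theorem pathEdges_append (hP : IsPathOn E a b P) (hQ : IsPathOn E b c Q) :
    pathEdges (P ++ Q.tail) = pathEdges P ++ pathEdges Q := by
  obtain ⟨P, rfl⟩ := getLast?_eq_some_iff.mp hP.getLast?_eq
  obtain ⟨Q, rfl⟩ := head?_eq_some_iff.mp hQ.head?_eq
  simpa using pathEdges_append_cons P Q

theorem pathEdges_concat (hp : IsPathOn E a b l) (c : V) :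
    pathEdges (l ++ [c]) = pathEdges l ++ [(b, c)] := by
  obtain ⟨l, rfl⟩ := getLast?_eq_some_iff.mp hp.getLast?_eq
  rw [append_assoc, singleton_append]
  exact pathEdges_append_cons l [c]

theorem exists_eq_append (hp : IsPathOn E a c l) (hb : b ∈ l) :
    ∃ P Q, IsPathOn E a b P ∧ IsPathOn E b c Q ∧ l = P ++ Q.tail := by
  obtain ⟨l₁, l₂, rfl⟩ := append_of_mem hb
  exact ⟨_, _, hp.left_of_append_cons, hp.right_of_append_cons, by simp⟩

theorem exists_eq_concat (hp : IsPathOn E a c l) (he : (b, c) ∈ pathEdges l) :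
    ∃ l₀, IsPathOn E a b l₀ ∧ l = l₀ ++ [c] := by
  obtain ⟨l₁, l₂, rfl⟩ := exists_eq_append_of_mem_pathEdges he
  have hc : IsPathOn E a c ((l₁ ++ [b]) ++ c :: l₂) := by simpa using hp
  obtain rfl : l₂ = [] := by simpa using hc.right_of_append_cons.eq_singleton
  exact ⟨_, hp.left_of_append_cons, by simp⟩

theorem mem_pathEdges_left_of_reflTransGen (hacyc : Acyclic E) (hP : IsPathOn E a b P)
    (hQ : IsPathOn E b c Q) (he : (x, y) ∈ pathEdges (P ++ Q.tail)) (hyb : y ⇝ b) :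
    (x, y) ∈ pathEdges P := by
  rw [hP.pathEdges_append hQ] at he
  refine (mem_append.mp he).resolve_right fun hQe => ?_
  have hbx := (hQ.reflTransGen_of_mem (fst_mem_of_mem_pathEdges hQe)).1
  exact hacyc.not_reflTransGen_of_mem (hQ.mem_edgeSet hQe) (hyb.trans hbx)

theorem exists_mem_forall_snd_reflTransGen {T : Finset (V × V)} (hp : IsPathOn E a b l)
    (hT : ∀ e ∈ T, e ∈ pathEdges l) :
    ∃ w ∈ l, (w = a ∨ ∃ x, (x, w) ∈ T) ∧ ∀ e ∈ T, e.2 ⇝ w := by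
  classical
  rcases T.eq_empty_or_nonempty with rfl | hne
  · exact ⟨a, hp.head_mem, Or.inl rfl, by simp⟩
  obtain ⟨⟨x, w⟩, hxw, hmax⟩ := T.exists_max_image (fun e => l.idxOf e.2) hne
  have hmem : ∀ e ∈ T, e.2 ∈ l := fun e he => snd_mem_of_mem_pathEdges (hT e he)
  exact ⟨w, hmem _ hxw, Or.inr ⟨x, hxw⟩,
    fun e he => hp.reflTransGen_of_idxOf_le (hmem e he) (hmem _ hxw) (hmax e he)⟩

end IsPathOn

theorem uniquePath_self (a : V) : UniquePath E a a :=
  ⟨[a], IsPathOn.singleton a, fun _ h => h.eq_singleton⟩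

theorem forcingSet_empty_self (s : V) : ForcingSet E s s ∅ := by
  simpa [ForcingSet, UniquePath] using uniquePath_self (E := E) s

namespace ForcingSet

theorem mem_edgeSet (hS : ForcingSet E s v S) (he : (x, y) ∈ S) : (x, y) ∈ E := by
  obtain ⟨l, ⟨hl, hlS⟩, -⟩ := hS
  exact hl.mem_edgeSet (hlS _ he)

theorem append_uniquePath (hacyc : Acyclic E) (hS : ForcingSet E s w S)
    (hw : w = s ∨ ∃ x, (x, w) ∈ S) (hwu : UniquePath E w u) : ForcingSet E s u S := by
  obtain ⟨P, ⟨hP, hPS⟩, hPuniq⟩ := hS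
  obtain ⟨Q, hQ, hQuniq⟩ := hwu
  refine ⟨P ++ Q.tail,
    ⟨hP.append hacyc hQ, fun e he => pathEdges_subset_append _ _ (hPS e he)⟩, ?_⟩
  rintro m ⟨hm, hmS⟩
  have hwm : w ∈ m := by
    rcases hw with rfl | ⟨x, hxw⟩
    · exact hm.head_mem
    · exact snd_mem_of_mem_pathEdges (hmS _ hxw)
  obtain ⟨P', Q', hP', hQ', rfl⟩ := hm.exists_eq_append hwm
  have hP'S : ∀ e ∈ S, e ∈ pathEdges P' := by
    rintro ⟨x, y⟩ hxy
    exact hP'.mem_pathEdges_left_of_reflTransGen hacyc hQ' (hmS _ hxy)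
      (hP.reflTransGen_of_mem (snd_mem_of_mem_pathEdges (hPS _ hxy))).2
  rw [hPuniq P' ⟨hP', hP'S⟩, hQuniq Q' hQ']

theorem exists_uniquePath (hacyc : Acyclic E) (hS : ForcingSet E s u S) :
    ∃ w, (w = s ∨ ∃ x, (x, w) ∈ S) ∧ ForcingSet E s w S ∧ UniquePath E w u := by
  obtain ⟨l, ⟨hl, hlS⟩, huniq⟩ := hS
  obtain ⟨w, hwl, hw, hSw⟩ := hl.exists_mem_forall_snd_reflTransGen hlS
  obtain ⟨P, Q, hP, hQ, rfl⟩ := hl.exists_eq_append hwl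
  have hPS : ∀ e ∈ S, e ∈ pathEdges P := by
    rintro ⟨x, y⟩ hxy
    exact hP.mem_pathEdges_left_of_reflTransGen hacyc hQ (hlS _ hxy) (hSw _ hxy)
  refine ⟨w, hw, ⟨P, ⟨hP, hPS⟩, ?_⟩, ⟨Q, hQ, fun p hp => ?_⟩⟩
  · rintro m ⟨hm, hmS⟩
    exact append_cancel_right (huniq _ ⟨hm.append hacyc hQ,
      fun e he => pathEdges_subset_append _ _ (hmS e he)⟩)
  · have hPp :=
      huniq _ ⟨hP.append hacyc hp, fun e he => pathEdges_subset_append _ _ (hPS e he)⟩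
    rw [hp.eq_cons, hQ.eq_cons, append_cancel_left hPp]

variable [DecidableEq V]

theorem insert_edge (hacyc : Acyclic E) (hS : ForcingSet E s u S) (he : (u, v) ∈ E) :
    ForcingSet E s v (insert (u, v) S) := by
  obtain ⟨l, ⟨hl, hlS⟩, huniq⟩ := hS
  have huv := IsPathOn.pair hacyc he
  refine ⟨l ++ [v], ⟨hl.append hacyc huv, fun e he => ?_⟩, ?_⟩
  · rw [hl.pathEdges_concat]
    rcases Finset.mem_insert.mp he with rfl | he
    · exact mem_append_right _ (mem_singleton_self _)
    · exact mem_append_left _ (hlS e he)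
  · rintro m ⟨hm, hmS⟩
    obtain ⟨m₀, hm₀, rfl⟩ := hm.exists_eq_concat (hmS _ (Finset.mem_insert_self _ _))
    have hm₀S : ∀ e ∈ S, e ∈ pathEdges m₀ := by
      rintro ⟨x, y⟩ hxy
      exact hm₀.mem_pathEdges_left_of_reflTransGen hacyc huv
        (hmS _ (Finset.mem_insert_of_mem hxy))
        (hl.reflTransGen_of_mem (snd_mem_of_mem_pathEdges (hlS _ hxy))).2
    rw [huniq m₀ ⟨hm₀, hm₀S⟩]

theorem erase_edge (hacyc : Acyclic E) (hS : ForcingSet E s v S) (huv : (u, v) ∈ S) :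
    ForcingSet E s u (S.erase (u, v)) := by
  obtain ⟨l, ⟨hl, hlS⟩, huniq⟩ := hS
  have hpair := IsPathOn.pair hacyc (hl.mem_edgeSet (hlS _ huv))
  obtain ⟨l₀, hl₀, rfl⟩ := hl.exists_eq_concat (hlS _ huv)
  refine ⟨l₀, ⟨hl₀, fun e he => ?_⟩, fun m ⟨hm, hmS⟩ => ?_⟩
  · obtain ⟨hne, heS⟩ := Finset.mem_erase.mp he
    simpa [hl₀.pathEdges_concat, hne] using hlS e heS
  · refine append_cancel_right (huniq (m ++ [v]) ⟨hm.append hacyc hpair, fun e he => ?_⟩)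
    rw [hm.pathEdges_concat]
    by_cases h : e = (u, v)
    · exact mem_append_right _ (mem_singleton.mpr h)
    · exact mem_append_left _ (hmS e (Finset.mem_erase.mpr ⟨h, he⟩))

end ForcingSet

theorem OPTe_le_card (hS : ForcingSet E s v S) (huv : (u, v) ∈ S) :
    OPTe E s (u, v) ≤ S.card := by
  rw [OPTe]
  exact Nat.sInf_le ⟨S, huv, hS, rfl⟩

theorem exists_forcingSet (hacyc : Acyclic E) (hsu : s ⇝ u) : ∃ S, ForcingSet E s u S := by
  classical
  induction hsu with
  | refl => exact ⟨∅, forcingSet_empty_self s⟩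
  | tail _ he ih =>
    obtain ⟨S, hS⟩ := ih
    exact ⟨_, hS.insert_edge hacyc he⟩

theorem exists_card_eq_OPTe (hacyc : Acyclic E) (hsu : s ⇝ u) (he : (u, v) ∈ E) :
    ∃ S, (u, v) ∈ S ∧ ForcingSet E s v S ∧ S.card = OPTe E s (u, v) := by
  classical
  obtain ⟨S, hS⟩ := exists_forcingSet hacyc hsu
  have hne : {n | ∃ S, (u, v) ∈ S ∧ ForcingSet E s v S ∧ S.card = n}.Nonempty :=
    ⟨_, _, Finset.mem_insert_self _ _, hS.insert_edge hacyc he, rfl⟩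
  exact Nat.sInf_mem hne

variable [DecidableEq V]

theorem OPTv_le_card (hS : ForcingSet E s w S) (hw : w = s ∨ ∃ x, (x, w) ∈ S) :
    OPTv E s w ≤ S.card := by
  rw [OPTv]
  split_ifs with hws
  · exact Nat.zero_le _
  · obtain ⟨x, hxw⟩ := hw.resolve_left hws
    refine le_trans ?_ (OPTe_le_card hS hxw)
    exact Nat.sInf_le ⟨x, hS.mem_edgeSet hxw, rfl⟩

-- `OPTv` minimises over all in-edges, and `OPTe` of an edge leaving a vertex that `s` does not
-- reach is `sInf ∅ = 0`.
theorem exists_card_eq_OPTv (hacyc : Acyclic E) (hreach : ∀ x, s ⇝ x) (w : V) :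
    ∃ S, (w = s ∨ ∃ x, (x, w) ∈ S) ∧ ForcingSet E s w S ∧ S.card = OPTv E s w := by
  by_cases hws : w = s
  · subst hws
    exact ⟨∅, Or.inl rfl, forcingSet_empty_self w, by simp [OPTv]⟩
  have hin : {n | ∃ x, (x, w) ∈ E ∧ n = OPTe E s (x, w)}.Nonempty := by
    obtain ⟨x, -, hxw⟩ := (hreach w).cases_tail.resolve_left hws
    exact ⟨_, x, hxw, rfl⟩
  obtain ⟨x, hxw, hx⟩ := Nat.sInf_mem hin
  obtain ⟨S, hxS, hS, hcard⟩ := exists_card_eq_OPTe hacyc (hreach x) hxw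
  exact ⟨S, Or.inr ⟨x, hxS⟩, hS, by rw [hcard, OPTv, if_neg hws, ← hx]⟩

end

theorem stmt19_general [DecidableEq V] (E : Set (V × V)) (hacyc : Acyclic E) (s t : V)
    (hreach : ∀ x : V, Relation.ReflTransGen (fun a b => (a, b) ∈ E) s x ∧
      Relation.ReflTransGen (fun a b => (a, b) ∈ E) x t)
    (u v : V) (he : (u, v) ∈ E) :
    OPTe E s (u, v) = sInf {n : ℕ | ∃ x : V, UniquePath E x u ∧ n = OPTv E s x} + 1 := by
  set B := {n : ℕ | ∃ x : V, UniquePath E x u ∧ n = OPTv E s x}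
  have hs x := (hreach x).1
  apply le_antisymm
  · obtain ⟨w, hwu, hw⟩ := Nat.sInf_mem (⟨_, u, uniquePath_self u, rfl⟩ : B.Nonempty)
    obtain ⟨S, hSw, hS, hcard⟩ := exists_card_eq_OPTv hacyc hs w
    calc OPTe E s (u, v) ≤ (insert (u, v) S).card :=
          OPTe_le_card ((hS.append_uniquePath hacyc hSw hwu).insert_edge hacyc he)
            (Finset.mem_insert_self _ _)
      _ ≤ S.card + 1 := Finset.card_insert_le _ _
      _ = _ := by rw [hcard, hw]
  · obtain ⟨S, huv, hS, hcard⟩ := exists_card_eq_OPTe hacyc (hs u) he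
    obtain ⟨w, hw, hSw, hwu⟩ := (hS.erase_edge hacyc huv).exists_uniquePath hacyc
    calc sInf B + 1 ≤ OPTv E s w + 1 := by gcongr; exact Nat.sInf_le ⟨w, hwu, rfl⟩
      _ ≤ (S.erase (u, v)).card + 1 := Nat.add_le_add_right (OPTv_le_card hSw hw) 1
      _ = OPTe E s (u, v) := by rw [Finset.card_erase_add_one huv, hcard]

/-- In a DAG in which every vertex is reachable from `s` and reaches `t`,
for every edge `e = (u, v)`: `OPT[e] = min { OPT[w] : w ↝! u } + 1`. -/
theorem stmt19 [Fintype V] [DecidableEq V] (E : Set (V × V)) (hacyc : Acyclic E) (s t : V)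
    (hreach : ∀ x : V, Relation.ReflTransGen (fun a b => (a, b) ∈ E) s x ∧
      Relation.ReflTransGen (fun a b => (a, b) ∈ E) x t)
    (u v : V) (he : (u, v) ∈ E) :
    OPTe E s (u, v) = sInf {n : ℕ | ∃ x : V, UniquePath E x u ∧ n = OPTv E s x} + 1 :=
  stmt19_general E hacyc s t hreach u v he
end
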